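/- Best rank-r approximation (Eckart–Young, Frobenius norm): let A be an m × n complex matrix with singular values σ₁ ≥ σ₂ ≥ ... and let A_r be the truncated SVD keeping the r largest singular values. Then for every matrix B of rank at most r, ‖A - A_r‖_F ≤ ‖A - B‖_F, and ‖A - A_r‖²_F = ∑_{i > r} σᵢ². -/

import Mathlib

open Finset Matrix

/-- Frobenius norm of a complex matrix. -/
noncomputable def frobNorm {m n : ℕ} (A : Matrix (Fin m) (Fin n) ℂ) : ℝ :=
  Real.sqrt (∑ i : Fin m, ∑ j : Fin n, ‖A i j‖ ^ 2)

namespace EckartYoungAux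

noncomputable def sqFrob {m n : ℕ} (M : Matrix (Fin m) (Fin n) ℂ) : ℝ :=
  ∑ i, ∑ j, ‖M i j‖ ^ 2

lemma frobNorm_eq {m n : ℕ} (M : Matrix (Fin m) (Fin n) ℂ) :
    frobNorm M = Real.sqrt (sqFrob M) := rfl

lemma sqFrob_nonneg {m n : ℕ} (M : Matrix (Fin m) (Fin n) ℂ) : 0 ≤ sqFrob M := by
  unfold sqFrob; positivity

lemma trace_eq {m n : ℕ} (M : Matrix (Fin m) (Fin n) ℂ) :
    (Mᴴ * M).trace = ((sqFrob M : ℝ) : ℂ) := by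
  simp only [Matrix.trace, Matrix.diag, Matrix.mul_apply, conjTranspose_apply, sqFrob]
  push_cast
  rw [Finset.sum_comm]
  congr 1; ext i; congr 1; ext j
  rw [Complex.star_def, ← Complex.normSq_eq_conj_mul_self, ← Complex.sq_norm]
  norm_cast

lemma sqFrob_eq_of_trace {m n m' n' : ℕ} {M : Matrix (Fin m) (Fin n) ℂ}
    {N : Matrix (Fin m') (Fin n') ℂ} (h : (Mᴴ * M).trace = (Nᴴ * N).trace) :
    sqFrob M = sqFrob N := by
  have := (trace_eq M).symm.trans (h.trans (trace_eq N))
  exact_mod_cast this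

lemma sqFrob_conj {m n : ℕ} (U : Matrix (Fin m) (Fin m) ℂ) (hU : Uᴴ * U = 1)
    (V : Matrix (Fin n) (Fin n) ℂ) (hV : Vᴴ * V = 1)
    (X : Matrix (Fin m) (Fin n) ℂ) : sqFrob (U * X * Vᴴ) = sqFrob X := by
  apply sqFrob_eq_of_trace
  have h1 : (U * X * Vᴴ)ᴴ * (U * X * Vᴴ) = V * (Xᴴ * ((Uᴴ * U) * (X * Vᴴ))) := by
    simp only [conjTranspose_mul, conjTranspose_conjTranspose, Matrix.mul_assoc]
  rw [h1, hU, Matrix.one_mul, Matrix.trace_mul_comm,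
    show Xᴴ * (X * Vᴴ) * V = (Xᴴ * X) * (Vᴴ * V) by simp [Matrix.mul_assoc], hV,
    Matrix.mul_one]

lemma sqFrob_mul_left {m n : ℕ} (U : Matrix (Fin m) (Fin m) ℂ) (hU : Uᴴ * U = 1)
    (X : Matrix (Fin m) (Fin n) ℂ) : sqFrob (U * X) = sqFrob X := by
  have := sqFrob_conj U hU (1 : Matrix (Fin n) (Fin n) ℂ) (by simp) X
  simpa using this

lemma sqFrob_mul_col_le {m n k : ℕ} (M : Matrix (Fin m) (Fin n) ℂ)
    (W : Matrix (Fin n) (Fin k) ℂ) (hW : Wᴴ * W = 1) :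
    sqFrob (M * W) ≤ sqFrob M := by
  set P : Matrix (Fin n) (Fin n) ℂ := W * Wᴴ with hP
  have hPH : Pᴴ = P := by simp [hP, conjTranspose_mul]
  have hP2 : P * P = P := by
    rw [hP, show W * Wᴴ * (W * Wᴴ) = W * (Wᴴ * W) * Wᴴ by simp [Matrix.mul_assoc], hW,
      Matrix.mul_one]
  have t1 : ((M * W)ᴴ * (M * W)).trace = ((Mᴴ * M) * P).trace := by
    rw [show (M * W)ᴴ * (M * W) = Wᴴ * ((Mᴴ * M) * W) by
      simp [conjTranspose_mul, Matrix.mul_assoc], Matrix.trace_mul_comm]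
    simp [hP, Matrix.mul_assoc]
  have t2 : ((M * P)ᴴ * (M * P)).trace = ((Mᴴ * M) * P).trace := by
    rw [show (M * P)ᴴ * (M * P) = Pᴴ * ((Mᴴ * M) * P) by
      simp [conjTranspose_mul, Matrix.mul_assoc], hPH, Matrix.trace_mul_comm,
      show Mᴴ * M * P * P = Mᴴ * M * (P * P) by simp [Matrix.mul_assoc], hP2]
  have t3 : ((M * (1 - P))ᴴ * (M * (1 - P))).trace = ((Mᴴ * M) * (1 - P)).trace := by
    have hQH : (1 - P)ᴴ = 1 - P := by simp [hPH]
    have hQ2 : (1 - P) * (1 - P) = 1 - P := by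
      simp only [Matrix.sub_mul, Matrix.mul_sub, Matrix.one_mul, Matrix.mul_one, hP2]
      abel
    rw [show (M * (1 - P))ᴴ * (M * (1 - P)) = (1 - P)ᴴ * ((Mᴴ * M) * (1 - P)) by
      simp [conjTranspose_mul, Matrix.mul_assoc], hQH, Matrix.trace_mul_comm,
      show Mᴴ * M * (1 - P) * (1 - P) = Mᴴ * M * ((1 - P) * (1 - P)) by
        simp [Matrix.mul_assoc], hQ2]
  have hsum : sqFrob (M * P) + sqFrob (M * (1 - P)) = sqFrob M := by
    have h : ((M * P)ᴴ * (M * P)).trace + ((M * (1 - P))ᴴ * (M * (1 - P))).trace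
        = (Mᴴ * M).trace := by
      rw [t2, t3, ← Matrix.trace_add, ← Matrix.mul_add]
      simp
    rw [trace_eq, trace_eq, trace_eq] at h
    exact_mod_cast h
  have e1 : sqFrob (M * W) = sqFrob (M * P) := sqFrob_eq_of_trace (t1.trans t2.symm)
  linarith [sqFrob_nonneg (M * (1 - P))]

lemma exists_isometry_ker {m n r : ℕ} (B : Matrix (Fin m) (Fin n) ℂ) (hB : B.rank ≤ r)
    (hr : r ≤ n) :
    ∃ W : Matrix (Fin n) (Fin (n - r)) ℂ, Wᴴ * W = 1 ∧ B * W = 0 := by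
  classical
  set f := Matrix.toEuclideanLin B with hf
  set K := LinearMap.ker f with hK
  have hrank : B.rank = Module.finrank ℂ (LinearMap.range f) := by
    rw [Matrix.rank_eq_finrank_range_toLin B (EuclideanSpace.basisFun (Fin m) ℂ).toBasis
      (EuclideanSpace.basisFun (Fin n) ℂ).toBasis, hf, Matrix.toEuclideanLin_eq_toLin_orthonormal]
  have hrn : Module.finrank ℂ (LinearMap.range f) + Module.finrank ℂ K = n := by
    rw [hK, LinearMap.finrank_range_add_finrank_ker f, finrank_euclideanSpace_fin]
  have hKge : n - r ≤ Module.finrank ℂ K := by omega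
  set b := stdOrthonormalBasis ℂ K with hb
  set e : Fin (n - r) → Fin (Module.finrank ℂ K) := fun a => ⟨a, lt_of_lt_of_le a.2 hKge⟩
  have he : Function.Injective e := by
    intro a c h
    simpa [e, Fin.ext_iff] using h
  refine ⟨Matrix.of fun j a => ((b (e a) : EuclideanSpace ℂ (Fin n)) j), ?_, ?_⟩
  · ext a c
    have horth := b.orthonormal
    rw [orthonormal_iff_ite] at horth
    have := horth (e a) (e c)
    rw [Submodule.coe_inner] at this
    rw [PiLp.inner_apply] at this
    simp only [RCLike.inner_apply'] at this
    simp only [Matrix.mul_apply, conjTranspose_apply, Matrix.of_apply]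
    rw [show ∑ j, star ((b (e a) : EuclideanSpace ℂ (Fin n)) j) * (b (e c) : EuclideanSpace ℂ (Fin n)) j = if e a = e c then 1 else 0 from this]
    by_cases h : a = c
    · subst h
      rw [if_pos rfl]
      exact (Matrix.one_apply_eq a).symm
    · rw [if_neg (fun hh => h (he hh)), Matrix.one_apply_ne h]
  · ext i a
    have hker : f (b (e a) : EuclideanSpace ℂ (Fin n)) = 0 := by
      have := (b (e a)).2
      simpa [hK, LinearMap.mem_ker] using this
    have hmul : B *ᵥ (fun j => (b (e a) : EuclideanSpace ℂ (Fin n)) j) = 0 := by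
      have h2 := congrArg WithLp.ofLp hker
      rw [hf, Matrix.ofLp_toEuclideanLin_apply] at h2
      simpa using h2
    simp only [Matrix.mul_apply, Matrix.of_apply, Matrix.zero_apply]
    have := congrFun hmul i
    simpa [Matrix.mulVec, dotProduct] using this

lemma count_ge {n r : ℕ} (hr : r ≤ n) :
    ∑ j : Fin n, (if r ≤ (j : ℕ) then (1:ℝ) else 0) = (n : ℝ) - r := by
  rw [Fin.sum_univ_eq_sum_range (fun t => if r ≤ t then (1:ℝ) else 0) n,
    Finset.sum_boole]
  have h : (Finset.range n).filter (fun t => r ≤ t) = Finset.Ico r n := by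
    ext t; simp [Finset.mem_Ico, Finset.mem_filter, Finset.mem_range]; omega
  rw [h, Nat.card_Ico, Nat.cast_sub hr]

lemma comb {n r : ℕ} (hr : r < n) (lam p : Fin n → ℝ)
    (hlam : Antitone lam) (hlam0 : ∀ j, 0 ≤ lam j)
    (hp0 : ∀ j, 0 ≤ p j) (hp1 : ∀ j, p j ≤ 1)
    (hsum : (n : ℝ) - r ≤ ∑ j, p j) :
    ∑ j : Fin n, (if r ≤ (j : ℕ) then lam j else 0) ≤ ∑ j, lam j * p j := by
  set c := lam ⟨r, hr⟩ with hc
  have pointwise : ∀ j : Fin n,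
      c * (p j - (if r ≤ (j : ℕ) then 1 else 0))
        ≤ lam j * p j - (if r ≤ (j : ℕ) then lam j else 0) := by
    intro j
    by_cases h : r ≤ (j : ℕ)
    · simp only [h, if_true]
      have h1 : lam j ≤ c := hlam (show (⟨r, hr⟩ : Fin n) ≤ j from h)
      nlinarith [hp1 j, hp0 j]
    · simp only [h, if_false]
      have h1 : c ≤ lam j := hlam (show j ≤ (⟨r, hr⟩ : Fin n) from le_of_lt (lt_of_not_ge h))
      nlinarith [hp0 j]
  have hS := Finset.sum_le_sum (fun j (_ : j ∈ Finset.univ) => pointwise j)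
  rw [Finset.sum_sub_distrib] at hS
  have expand : ∑ j : Fin n, c * (p j - (if r ≤ (j : ℕ) then 1 else 0))
      = c * ((∑ j, p j) - ((n : ℝ) - r)) := by
    rw [← Finset.mul_sum, Finset.sum_sub_distrib, count_ge (le_of_lt hr)]
  rw [expand] at hS
  have hcpos : 0 ≤ c := hlam0 _
  nlinarith [hS, hsum]

noncomputable def lamFun {m n : ℕ} (σ : Fin (min m n) → ℝ) : ℕ → ℝ :=
  fun t => if h : t < min m n then σ ⟨t, h⟩ ^ 2 else 0

noncomputable def pFun {n k : ℕ} (Y : Matrix (Fin n) (Fin k) ℂ) : ℕ → ℝ :=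
  fun t => if h : t < n then ∑ a, ‖Y ⟨t, h⟩ a‖ ^ 2 else 0

lemma lamFun_nonneg {m n : ℕ} (σ : Fin (min m n) → ℝ) (t : ℕ) : 0 ≤ lamFun σ t := by
  unfold lamFun; split
  · positivity
  · exact le_refl 0

lemma lamFun_zero {m n : ℕ} (σ : Fin (min m n) → ℝ) {t : ℕ} (h : min m n ≤ t) :
    lamFun σ t = 0 := by
  unfold lamFun; rw [dif_neg (by omega)]

lemma pFun_nonneg {n k : ℕ} (Y : Matrix (Fin n) (Fin k) ℂ) (t : ℕ) : 0 ≤ pFun Y t := by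
  unfold pFun; split
  · positivity
  · exact le_refl 0

lemma sqFrob_S_mul {m n k : ℕ} (σ : Fin (min m n) → ℝ)
    (S : Matrix (Fin m) (Fin n) ℂ)
    (hS : ∀ i j, S i j = if h : ((i : ℕ) = (j : ℕ) ∧ (i : ℕ) < min m n)
      then ((σ ⟨(i : ℕ), h.2⟩ : ℝ) : ℂ) else 0)
    (Y : Matrix (Fin n) (Fin k) ℂ) :
    sqFrob (S * Y) = ∑ t ∈ Finset.range (min m n), lamFun σ t * pFun Y t := by
  have row : ∀ i : Fin m, ∑ a, ‖(S * Y) i a‖ ^ 2 = lamFun σ i * pFun Y i := by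
    intro i
    by_cases h : (i : ℕ) < min m n
    · have hn : (i : ℕ) < n := lt_of_lt_of_le h (min_le_right m n)
      set j₀ : Fin n := ⟨(i : ℕ), hn⟩ with hj₀
      have hentry : ∀ a, (S * Y) i a = ((σ ⟨(i : ℕ), h⟩ : ℝ) : ℂ) * Y j₀ a := by
        intro a
        rw [Matrix.mul_apply]
        rw [Finset.sum_eq_single j₀]
        · rw [hS]; rw [dif_pos ⟨rfl, h⟩]
        · intro j _ hj
          rw [hS, dif_neg, zero_mul]
          rintro ⟨h1, -⟩
          exact hj (Fin.ext h1.symm)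
        · intro hj; exact absurd (Finset.mem_univ j₀) hj
      simp only [hentry, norm_mul, mul_pow, Complex.norm_real, Real.norm_eq_abs, _root_.sq_abs]
      rw [← Finset.mul_sum]
      unfold lamFun pFun
      rw [dif_pos h, dif_pos hn]
    · have hz : ∀ a, (S * Y) i a = 0 := by
        intro a
        rw [Matrix.mul_apply]
        apply Finset.sum_eq_zero
        intro j _
        rw [hS, dif_neg, zero_mul]
        rintro ⟨-, h2⟩; exact h h2
      simp only [hz, norm_zero]
      unfold lamFun
      rw [dif_neg h, zero_mul]
      simp
  unfold sqFrob
  calc ∑ i : Fin m, ∑ a, ‖(S * Y) i a‖ ^ 2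
      = ∑ i : Fin m, (fun t => lamFun σ t * pFun Y t) (i : ℕ) := by
        exact Finset.sum_congr rfl fun i _ => row i
    _ = ∑ t ∈ Finset.range m, (fun t => lamFun σ t * pFun Y t) t := by
        rw [Fin.sum_univ_eq_sum_range (fun t => lamFun σ t * pFun Y t) m]
    _ = ∑ t ∈ Finset.range (min m n), lamFun σ t * pFun Y t := by
        exact (Finset.sum_subset (Finset.range_subset_range.2 (min_le_left m n))
          (fun x _ hx => by
            rw [lamFun_zero σ (le_of_not_gt fun hc => hx (Finset.mem_range.2 hc)), zero_mul])).symm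

lemma col_norm {n k : ℕ} (Y : Matrix (Fin n) (Fin k) ℂ) (hY : Yᴴ * Y = 1) (a : Fin k) :
    ∑ j, ‖Y j a‖ ^ 2 = 1 := by
  have h := congrFun (congrFun hY a) a
  rw [Matrix.mul_apply] at h
  simp only [conjTranspose_apply, Matrix.one_apply_eq] at h
  have h2 : (((∑ j, ‖Y j a‖ ^ 2 : ℝ)) : ℂ) = 1 := by
    rw [← h]
    push_cast
    refine Finset.sum_congr rfl fun j _ => ?_
    rw [Complex.star_def, ← Complex.normSq_eq_conj_mul_self, ← Complex.sq_norm]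
    norm_cast
  exact_mod_cast h2

lemma pFun_sum {n k : ℕ} (Y : Matrix (Fin n) (Fin k) ℂ) (hY : Yᴴ * Y = 1) :
    ∑ j : Fin n, pFun Y (j : ℕ) = k := by
  have h : ∀ j : Fin n, pFun Y (j : ℕ) = ∑ a, ‖Y j a‖ ^ 2 := by
    intro j; unfold pFun; rw [dif_pos j.2]
  simp only [h]
  rw [Finset.sum_comm]
  simp only [col_norm Y hY]
  simp

lemma pFun_le_one {n k : ℕ} (Y : Matrix (Fin n) (Fin k) ℂ) (hY : Yᴴ * Y = 1) (t : ℕ) :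
    pFun Y t ≤ 1 := by
  unfold pFun
  split
  case isFalse => exact zero_le_one
  case isTrue h =>
    set j : Fin n := ⟨t, h⟩
    set G := Y * Yᴴ with hG
    set p := ∑ a, ‖Y j a‖ ^ 2 with hp
    have hGjj : G j j = ((p : ℝ) : ℂ) := by
      rw [hG, Matrix.mul_apply, hp]
      push_cast
      refine Finset.sum_congr rfl fun a _ => ?_
      rw [conjTranspose_apply, Complex.star_def, Complex.mul_conj, ← Complex.sq_norm]
      norm_cast
    have hGH : Gᴴ = G := by simp [hG, conjTranspose_mul]
    have hG2 : G * G = G := by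
      rw [hG, show Y * Yᴴ * (Y * Yᴴ) = Y * (Yᴴ * Y) * Yᴴ by simp [Matrix.mul_assoc], hY,
        Matrix.mul_one]
    have hGsym : ∀ l, G l j = star (G j l) := by
      intro l
      conv_lhs => rw [← hGH]
      rw [conjTranspose_apply]
    have hjj : G j j = (G * G) j j := by rw [hG2]
    have key : ((p : ℝ) : ℂ) = ((∑ l, ‖G j l‖ ^ 2 : ℝ) : ℂ) := by
      rw [← hGjj, hjj, Matrix.mul_apply]
      push_cast
      refine Finset.sum_congr rfl fun l _ => ?_
      rw [hGsym l, Complex.star_def, Complex.mul_conj, ← Complex.sq_norm]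
      norm_cast
    have hpe : p = ∑ l, ‖G j l‖ ^ 2 := by exact_mod_cast key
    have hge : ‖G j j‖ ^ 2 ≤ ∑ l, ‖G j l‖ ^ 2 :=
      Finset.single_le_sum (f := fun l => ‖G j l‖ ^ 2)
        (fun l _ => by positivity) (Finset.mem_univ j)
    have hp0 : 0 ≤ p := by
      rw [hp]; positivity
    have habs : ‖G j j‖ = p := by
      rw [hGjj, Complex.norm_real, Real.norm_eq_abs, abs_of_nonneg hp0]
    rw [habs] at hge
    nlinarith [hpe, hge]

lemma sqFrob_diag {m n r : ℕ} (σ : Fin (min m n) → ℝ) (D : Matrix (Fin m) (Fin n) ℂ)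
    (hD : ∀ i j, D i j = if h : ((i : ℕ) = (j : ℕ) ∧ (i : ℕ) < min m n ∧ r ≤ (i : ℕ))
      then ((σ ⟨(i : ℕ), h.2.1⟩ : ℝ) : ℂ) else 0) :
    sqFrob D = ∑ i : Fin (min m n), (if r ≤ (i : ℕ) then σ i ^ 2 else 0) := by
  have row : ∀ i : Fin m, ∑ j, ‖D i j‖ ^ 2
      = (fun t => if h : t < min m n then (if r ≤ t then σ ⟨t, h⟩ ^ 2 else 0) else 0) (i : ℕ) := by
    intro i
    by_cases h : (i : ℕ) < min m n
    · have hn : (i : ℕ) < n := lt_of_lt_of_le h (min_le_right m n)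
      set j₀ : Fin n := ⟨(i : ℕ), hn⟩ with hj₀
      rw [Finset.sum_eq_single j₀]
      · simp only [dif_pos h]
        by_cases hri : r ≤ (i : ℕ)
        · rw [hD, dif_pos ⟨rfl, h, hri⟩, if_pos hri, Complex.norm_real, Real.norm_eq_abs, _root_.sq_abs]
        · rw [hD, dif_neg (fun hc => hri hc.2.2), if_neg hri]
          simp
      · intro j _ hj
        rw [hD, dif_neg]
        · simp
        rintro ⟨h1, -⟩
        exact hj (Fin.ext h1.symm)
      · intro hj; exact absurd (Finset.mem_univ j₀) hj
    · simp only [dif_neg h]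
      apply Finset.sum_eq_zero
      intro j _
      rw [hD, dif_neg]
      · simp
      rintro ⟨-, h2, -⟩
      exact h h2
  unfold sqFrob
  rw [Finset.sum_congr rfl fun i _ => row i,
    Fin.sum_univ_eq_sum_range (fun t => if h : t < min m n then (if r ≤ t then σ ⟨t, h⟩ ^ 2 else 0) else 0) m,
    ← Finset.sum_subset (Finset.range_subset_range.2 (min_le_left m n))
      (fun x _ hx => dif_neg (fun hc => hx (Finset.mem_range.2 hc))),
    ← Fin.sum_univ_eq_sum_range
      (fun t => if h : t < min m n then (if r ≤ t then σ ⟨t, h⟩ ^ 2 else 0) else 0) (min m n)]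
  refine Finset.sum_congr rfl fun i _ => ?_
  rw [dif_pos i.2, Fin.eta]

end EckartYoungAux

open EckartYoungAux in
/-- Eckart–Young theorem (Frobenius norm): the truncated SVD keeping the `r`
largest singular values is a best rank-`r` approximation, and the squared error
is the sum of the discarded squared singular values. -/
theorem eckart_young (m n r : ℕ)
    (A : Matrix (Fin m) (Fin n) ℂ)
    (U : Matrix (Fin m) (Fin m) ℂ) (hU : U ∈ Matrix.unitaryGroup (Fin m) ℂ)
    (V : Matrix (Fin n) (Fin n) ℂ) (hV : V ∈ Matrix.unitaryGroup (Fin n) ℂ)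
    (σ : Fin (min m n) → ℝ) (hσ : ∀ i, 0 ≤ σ i) (hmono : Antitone σ)
    (S Sr : Matrix (Fin m) (Fin n) ℂ)
    (hS : ∀ i j, S i j =
      if h : ((i : ℕ) = (j : ℕ) ∧ (i : ℕ) < min m n)
      then ((σ ⟨(i : ℕ), h.2⟩ : ℝ) : ℂ) else 0)
    (hSr : ∀ i j, Sr i j =
      if h : ((i : ℕ) = (j : ℕ) ∧ (i : ℕ) < min m n ∧ (i : ℕ) < r)
      then ((σ ⟨(i : ℕ), h.2.1⟩ : ℝ) : ℂ) else 0)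
    (hA : A = U * S * Vᴴ)
    (Ar : Matrix (Fin m) (Fin n) ℂ) (hAr : Ar = U * Sr * Vᴴ) :
    (∀ B : Matrix (Fin m) (Fin n) ℂ, B.rank ≤ r →
        frobNorm (A - Ar) ≤ frobNorm (A - B)) ∧
      frobNorm (A - Ar) ^ 2 =
        ∑ i : Fin (min m n), if r ≤ (i : ℕ) then σ i ^ 2 else 0 := by
  have hU1 : Uᴴ * U = 1 := by
    have := hU.1; rwa [Matrix.star_eq_conjTranspose] at this
  have hV1 : Vᴴ * V = 1 := by
    have := hV.1; rwa [Matrix.star_eq_conjTranspose] at this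
  have hV2 : V * Vᴴ = 1 := by
    have := hV.2; rwa [Matrix.star_eq_conjTranspose] at this
  have hD : ∀ i j, (S - Sr) i j =
      if h : ((i : ℕ) = (j : ℕ) ∧ (i : ℕ) < min m n ∧ r ≤ (i : ℕ))
      then ((σ ⟨(i : ℕ), h.2.1⟩ : ℝ) : ℂ) else 0 := by
    intro i j
    rw [Matrix.sub_apply, hS i j, hSr i j]
    by_cases h1 : ((i : ℕ) = (j : ℕ) ∧ (i : ℕ) < min m n)
    · rw [dif_pos h1]
      by_cases h3 : (i : ℕ) < r
      · rw [dif_pos ⟨h1.1, h1.2, h3⟩, dif_neg (fun hc => not_le.mpr h3 hc.2.2), sub_self]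
      · rw [dif_neg (fun hc => h3 hc.2.2), dif_pos ⟨h1.1, h1.2, le_of_not_gt h3⟩, sub_zero]
    · rw [dif_neg h1, dif_neg (fun hc => h1 ⟨hc.1, hc.2.1⟩),
        dif_neg (fun hc => h1 ⟨hc.1, hc.2.1⟩), sub_zero]
  have hAAr : A - Ar = U * (S - Sr) * Vᴴ := by
    rw [hA, hAr, Matrix.mul_sub, Matrix.sub_mul]
  have hE : sqFrob (A - Ar)
      = ∑ i : Fin (min m n), (if r ≤ (i : ℕ) then σ i ^ 2 else 0) := by
    rw [hAAr, sqFrob_conj U hU1 V hV1, sqFrob_diag σ (S - Sr) hD]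
  constructor
  · intro B hB
    rw [frobNorm_eq, frobNorm_eq]
    apply Real.sqrt_le_sqrt
    rw [hE]
    by_cases hcase : min m n ≤ r
    · have hz : (∑ i : Fin (min m n), if r ≤ (i : ℕ) then σ i ^ 2 else 0) = 0 :=
        Finset.sum_eq_zero fun i _ => if_neg (by omega)
      rw [hz]
      exact sqFrob_nonneg _
    · push_neg at hcase
      have hrn : r < n := lt_of_lt_of_le hcase (min_le_right m n)
      obtain ⟨W, hW, hBW⟩ := exists_isometry_ker B hB hrn.le
      set Y := Vᴴ * W with hYdef
      have hY : Yᴴ * Y = 1 := by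
        have h : Yᴴ * Y = Wᴴ * ((V * Vᴴ) * W) := by
          simp [hYdef, conjTranspose_mul, Matrix.mul_assoc]
        rw [h, hV2, Matrix.one_mul, hW]
      have step2 : (A - B) * W = U * (S * Y) := by
        rw [Matrix.sub_mul, hBW, sub_zero, hA]
        simp [hYdef, Matrix.mul_assoc]
      have hanti : Antitone (fun j : Fin n => lamFun σ (j : ℕ)) := by
        intro j₁ j₂ hle
        by_cases h2 : (j₂ : ℕ) < min m n
        · have h1 : (j₁ : ℕ) < min m n := lt_of_le_of_lt hle h2
          show lamFun σ (j₂ : ℕ) ≤ lamFun σ (j₁ : ℕ)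
          unfold lamFun
          rw [dif_pos h1, dif_pos h2]
          exact pow_le_pow_left₀ (hσ _)
            (hmono (show (⟨(j₁ : ℕ), h1⟩ : Fin (min m n)) ≤ ⟨(j₂ : ℕ), h2⟩ from hle)) 2
        · show lamFun σ (j₂ : ℕ) ≤ lamFun σ (j₁ : ℕ)
          rw [lamFun_zero σ (le_of_not_gt h2)]
          exact lamFun_nonneg σ _
      have hcomb := comb hrn (fun j : Fin n => lamFun σ (j : ℕ))
        (fun j : Fin n => pFun Y (j : ℕ)) hanti (fun j => lamFun_nonneg σ _)
        (fun j => pFun_nonneg Y _) (fun j => pFun_le_one Y hY _)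
        (by rw [pFun_sum Y hY, Nat.cast_sub hrn.le])
      have hLHS : ∑ i : Fin (min m n), (if r ≤ (i : ℕ) then σ i ^ 2 else 0)
          = ∑ j : Fin n, (if r ≤ (j : ℕ) then lamFun σ (j : ℕ) else 0) := by
        rw [Fin.sum_univ_eq_sum_range (fun t => if r ≤ t then lamFun σ t else 0) n,
          ← Finset.sum_subset (Finset.range_subset_range.2 (min_le_right m n))
            (fun x _ hx => by
              rw [lamFun_zero σ (le_of_not_gt fun hc => hx (Finset.mem_range.2 hc)), ite_self]),
          ← Fin.sum_univ_eq_sum_range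
            (fun t => if r ≤ t then lamFun σ t else 0) (min m n)]
        refine Finset.sum_congr rfl fun i _ => ?_
        unfold lamFun
        rw [dif_pos i.2, Fin.eta]
      have hRHS : ∑ j : Fin n, lamFun σ (j : ℕ) * pFun Y (j : ℕ) = sqFrob (S * Y) := by
        rw [sqFrob_S_mul σ S hS Y,
          Fin.sum_univ_eq_sum_range (fun t => lamFun σ t * pFun Y t) n,
          ← Finset.sum_subset (Finset.range_subset_range.2 (min_le_right m n))
            (fun x _ hx => by
              rw [lamFun_zero σ (le_of_not_gt fun hc => hx (Finset.mem_range.2 hc)), zero_mul])]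
      calc ∑ i : Fin (min m n), (if r ≤ (i : ℕ) then σ i ^ 2 else 0)
          = ∑ j : Fin n, (if r ≤ (j : ℕ) then lamFun σ (j : ℕ) else 0) := hLHS
        _ ≤ ∑ j : Fin n, lamFun σ (j : ℕ) * pFun Y (j : ℕ) := hcomb
        _ = sqFrob (S * Y) := hRHS
        _ = sqFrob (U * (S * Y)) := (sqFrob_mul_left U hU1 _).symm
        _ = sqFrob ((A - B) * W) := by rw [step2]
        _ ≤ sqFrob (A - B) := sqFrob_mul_col_le _ W hW
  · rw [frobNorm_eq, Real.sq_sqrt (sqFrob_nonneg _), hE]
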